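/- arXiv:0907.3412 — 3 statements merged into one kernel-verified Lean document; each statement's English description precedes it below -/
import Mathlib

section
/- For every natural number t, v_2(S(128t + 28, 5)) > 5 and v_2(S(128t + 31, 5)) > 5. -/
/-!
Modulo `64`, the columns `0, …, 5` of the Stirling triangle evolve by the recurrence
`S(n+1,k+1) = S(n,k) + (k+1) S(n,k+1)`, a map on a finite set; hence `n ↦ S(n,5) mod 64` is
eventually periodic. A finite computation shows that rows `8` and `136` agree mod `64`, so the
residue has period `128` from row `8` on, and `S(28,5) ≡ S(31,5) ≡ 0 (mod 64)`. As `S(n,5) > 0`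
for `n ≥ 5`, divisibility by `2⁶` gives `v₂(S(n,5)) ≥ 6`.
-/

/-- Stirling numbers of the second kind, via the recurrence
`S(n+1,k+1) = S(n,k) + (k+1) * S(n,k+1)`. -/
def stirling2 : ℕ → ℕ → ℕ
  | 0, 0 => 1
  | 0, _ + 1 => 0
  | _ + 1, 0 => 0
  | n + 1, k + 1 => stirling2 n k + (k + 1) * stirling2 n (k + 1)

theorem stirling2_succ_succ_pos : ∀ {n k : ℕ}, k ≤ n → 0 < stirling2 (n + 1) (k + 1)
  | 0, 0, _ => Nat.one_pos
  | n + 1, 0, _ =>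
    Nat.add_pos_right _ (Nat.mul_pos Nat.one_pos (stirling2_succ_succ_pos n.zero_le))
  | _ + 1, _ + 1, h => Nat.add_pos_left (stirling2_succ_succ_pos (Nat.le_of_succ_le_succ h)) _

theorem Function.IsPeriodicPt.iterate_mul_add_of_le {α : Type*} {f : α → α} {x : α} {a p : ℕ}
    (h : IsPeriodicPt f p (f^[a] x)) (t : ℕ) {n : ℕ} (hn : a ≤ n) :
    f^[p * t + n] x = f^[n] x := by
  obtain ⟨r, rfl⟩ := Nat.exists_eq_add_of_le hn
  rw [show p * t + (a + r) = r + (p * t + a) by ring, iterate_add_apply, iterate_add_apply,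
    (h.mul_const t).eq, ← iterate_add_apply, add_comm]

section RowMod

variable (m : ℕ)

def stirling2RowMod (n : ℕ) : ℕ × ℕ × ℕ × ℕ × ℕ × ℕ :=
  (stirling2 n 0 % m, stirling2 n 1 % m, stirling2 n 2 % m, stirling2 n 3 % m,
    stirling2 n 4 % m, stirling2 n 5 % m)

def stirling2StepMod : ℕ × ℕ × ℕ × ℕ × ℕ × ℕ → ℕ × ℕ × ℕ × ℕ × ℕ × ℕ :=
  fun (a, b, c, d, e, f) =>
    (0, (a + 1 * b) % m, (b + 2 * c) % m, (c + 3 * d) % m, (d + 4 * e) % m, (e + 5 * f) % m)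

theorem stirling2RowMod_succ (n : ℕ) :
    stirling2RowMod m (n + 1) = stirling2StepMod m (stirling2RowMod m n) := by
  simp only [stirling2RowMod, stirling2StepMod, stirling2, Nat.zero_mod, Prod.mk.injEq, true_and]
  refine ⟨?_, ?_, ?_, ?_, ?_⟩ <;> simp [Nat.add_mod, Nat.mul_mod]

theorem stirling2RowMod_eq_iterate (n : ℕ) :
    stirling2RowMod m n = (stirling2StepMod m)^[n] (stirling2RowMod m 0) := by
  induction n with
  | zero => rfl
  | succ n ih => rw [Function.iterate_succ_apply', ← ih, stirling2RowMod_succ]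

end RowMod

theorem stirling2RowMod_sixtyFour_mul_add (t : ℕ) {n : ℕ} (hn : 8 ≤ n) :
    stirling2RowMod 64 (128 * t + n) = stirling2RowMod 64 n := by
  have h : Function.IsPeriodicPt (stirling2StepMod 64) 128
      ((stirling2StepMod 64)^[8] (stirling2RowMod 64 0)) := by
    unfold Function.IsPeriodicPt Function.IsFixedPt
    set_option maxRecDepth 4000 in decide
  rw [stirling2RowMod_eq_iterate 64 (128 * t + n), stirling2RowMod_eq_iterate 64 n,
    h.iterate_mul_add_of_le t hn]

theorem stirling2_five_mod_sixtyFour_mul_add (t : ℕ) {n : ℕ} (hn : 8 ≤ n) :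
    stirling2 (128 * t + n) 5 % 64 = stirling2 n 5 % 64 :=
  congrArg (fun row => row.2.2.2.2.2) (stirling2RowMod_sixtyFour_mul_add t hn)

theorem five_lt_padicValNat_two_stirling2_five (t : ℕ) {n : ℕ} (hn : 8 ≤ n)
    (h0 : stirling2 n 5 % 64 = 0) : 5 < padicValNat 2 (stirling2 (128 * t + n) 5) := by
  have hpos : stirling2 (128 * t + n) 5 ≠ 0 := by
    obtain ⟨r, hr⟩ : ∃ r, 128 * t + n = (r + 4) + 1 := ⟨128 * t + n - 5, by omega⟩
    exact hr ▸ (stirling2_succ_succ_pos (Nat.le_add_left 4 r)).ne'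
  have hdvd : 2 ^ 6 ∣ stirling2 (128 * t + n) 5 :=
    Nat.dvd_of_mod_eq_zero ((stirling2_five_mod_sixtyFour_mul_add t hn).trans h0)
  exact (padicValNat_dvd_iff_le hpos).mp hdvd

theorem stmt_10 (t : ℕ) :
    5 < padicValNat 2 (stirling2 (128 * t + 28) 5) ∧
    5 < padicValNat 2 (stirling2 (128 * t + 31) 5) :=
  ⟨five_lt_padicValNat_two_stirling2_five t (by norm_num) (by decide),
    five_lt_padicValNat_two_stirling2_five t (by norm_num) (by decide)⟩
end

section
/- For every natural number t, v_2(S(256t + 28, 5)) = 6 and v_2(S(256t + 159, 5)) = 6. -/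
open Function

theorem padicValNat_eq_of_mod_pow_succ_eq_pow {p k x : ℕ} [hp : Fact p.Prime]
    (h : x % p ^ (k + 1) = p ^ k) : padicValNat p x = k := by
  have hx : x ≠ 0 := by
    rintro rfl
    exact (pow_ne_zero k hp.out.ne_zero) (by simpa using h.symm)
  have hdvd : p ^ k ∣ x := by
    rw [← Nat.div_add_mod x (p ^ (k + 1)), h]
    exact dvd_add (dvd_mul_of_dvd_left (pow_dvd_pow p k.le_succ) _) dvd_rfl
  have hndvd : ¬ p ^ (k + 1) ∣ x := by
    rw [Nat.dvd_iff_mod_eq_zero, h]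
    exact pow_ne_zero k hp.out.ne_zero
  rw [padicValNat_dvd_iff_le hx] at hdvd hndvd
  omega

def stirlingRowMod (m n : ℕ) : ℕ × ℕ × ℕ × ℕ × ℕ × ℕ :=
  (stirling2 n 0 % m, stirling2 n 1 % m, stirling2 n 2 % m,
   stirling2 n 3 % m, stirling2 n 4 % m, stirling2 n 5 % m)

def stirlingStepMod (m : ℕ) : ℕ × ℕ × ℕ × ℕ × ℕ × ℕ → ℕ × ℕ × ℕ × ℕ × ℕ × ℕ
  | (a₀, a₁, a₂, a₃, a₄, a₅) =>
    (0, (a₀ + a₁) % m, (a₁ + 2 * a₂) % m, (a₂ + 3 * a₃) % m, (a₃ + 4 * a₄) % m, (a₄ + 5 * a₅) % m)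

theorem stirlingRowMod_succ (m n : ℕ) :
    stirlingRowMod m (n + 1) = stirlingStepMod m (stirlingRowMod m n) := by
  simp only [stirlingRowMod, stirlingStepMod, stirling2, Prod.mk.injEq]
  refine ⟨?_, ?_, ?_, ?_, ?_, ?_⟩ <;> simp [Nat.add_mod, Nat.mul_mod]

theorem stirlingRowMod_add (m n k : ℕ) :
    stirlingRowMod m (n + k) = (stirlingStepMod m)^[k] (stirlingRowMod m n) := by
  induction k with
  | zero => rfl
  | succ k ih => rw [← Nat.add_assoc, stirlingRowMod_succ, ih, iterate_succ_apply']

theorem stirlingRowMod_add_mul_of_isPeriodicPt {m n₀ p : ℕ}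
    (hp : IsPeriodicPt (stirlingStepMod m) p (stirlingRowMod m n₀)) {n : ℕ} (hn : n₀ ≤ n)
    (t : ℕ) : stirlingRowMod m (p * t + n) = stirlingRowMod m n := by
  obtain ⟨d, rfl⟩ := Nat.exists_eq_add_of_le hn
  rw [show p * t + (n₀ + d) = n₀ + (d + p * t) by ring, stirlingRowMod_add, stirlingRowMod_add,
    iterate_add_apply, (hp.mul_const t).eq]

set_option maxRecDepth 40000 in
theorem stmt_11 (t : ℕ) :
    padicValNat 2 (stirling2 (256 * t + 28) 5) = 6 ∧
    padicValNat 2 (stirling2 (256 * t + 159) 5) = 6 := by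
  have hrow : ∀ n, stirlingRowMod 128 n = (stirlingStepMod 128)^[n] (stirlingRowMod 128 0) := by
    intro n; simpa using stirlingRowMod_add 128 0 n
  have hper : IsPeriodicPt (stirlingStepMod 128) 256 (stirlingRowMod 128 28) := by
    rw [hrow]; decide
  have hval : ∀ n, 28 ≤ n → (stirlingRowMod 128 n).2.2.2.2.2 = 64 →
      padicValNat 2 (stirling2 (256 * t + n) 5) = 6 := by
    intro n hn h
    apply padicValNat_eq_of_mod_pow_succ_eq_pow
    rw [← stirlingRowMod_add_mul_of_isPeriodicPt hper hn t] at h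
    exact h
  exact ⟨hval 28 le_rfl (by rw [hrow]; decide), hval 159 (by norm_num) (by rw [hrow]; decide)⟩
end

section
/- For every natural number t, v_2(S(256t + 156, 5)) > 6 and v_2(S(256t + 31, 5)) > 6. -/
/-!
From `S(n+1,k+1) = (k+1) S(n,k+1) + S(n,k)` one gets the explicit formula
`120 S(n,5) = 5^n - 5·4^n + 10·3^n - 10·2^n + 5`. For `n ≥ 10` the powers of `2` and `4` vanish
modulo `2^10`, and `5` and `3` have order dividing `256` modulo `2^10`, so modulo `1024` the
right-hand side only depends on `n mod 256`. For the residues `156` and `31` it is `0`, hence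
`2^10 ∣ 120 S(n,5)` and, as `v_2(120) = 3`, `2^7 ∣ S(n,5)`.
-/

open Nat

lemma stirling2_eq_stirlingSecond : stirling2 = stirlingSecond := by
  funext n k
  induction n generalizing k with
  | zero => cases k <;> rfl
  | succ n ih =>
    cases k with
    | zero => rfl
    | succ k => rw [stirling2, stirlingSecond_succ_succ, ih, ih, add_comm]

lemma stirlingSecond_pos {n k : ℕ} (hk : 0 < k) (hkn : k ≤ n) : 0 < stirlingSecond n k := by
  induction n generalizing k with
  | zero => omega
  | succ n ih =>
    obtain ⟨k, rfl⟩ := Nat.exists_eq_add_of_lt hk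
    rw [zero_add, stirlingSecond_succ_succ]
    rcases Nat.lt_or_ge n (k + 1) with hnk | hkn'
    · rw [show k = n by omega, stirlingSecond_self]
      omega
    · have := ih (Nat.succ_pos k) hkn'
      positivity

lemma two_mul_stirlingSecond_two (n : ℕ) :
    2 * (stirlingSecond (n + 1) 2 : ℤ) = 2 ^ (n + 1) - 2 := by
  induction n with
  | zero => rfl
  | succ n ih =>
    rw [stirlingSecond_succ_succ, stirlingSecond_one_right]
    push_cast
    linear_combination 2 * ih

lemma six_mul_stirlingSecond_three (n : ℕ) :
    6 * (stirlingSecond (n + 1) 3 : ℤ) = 3 ^ (n + 1) - 3 * 2 ^ (n + 1) + 3 := by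
  induction n with
  | zero => rfl
  | succ n ih =>
    rw [stirlingSecond_succ_succ]
    push_cast
    linear_combination 3 * ih + 3 * two_mul_stirlingSecond_two n

lemma twentyFour_mul_stirlingSecond_four (n : ℕ) :
    24 * (stirlingSecond (n + 1) 4 : ℤ) = 4 ^ (n + 1) - 4 * 3 ^ (n + 1) + 6 * 2 ^ (n + 1) - 4 := by
  induction n with
  | zero => rfl
  | succ n ih =>
    rw [stirlingSecond_succ_succ]
    push_cast
    linear_combination 4 * ih + 4 * six_mul_stirlingSecond_three n

lemma oneHundredTwenty_mul_stirlingSecond_five (n : ℕ) :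
    120 * (stirlingSecond (n + 1) 5 : ℤ) =
      5 ^ (n + 1) - 5 * 4 ^ (n + 1) + 10 * 3 ^ (n + 1) - 10 * 2 ^ (n + 1) + 5 := by
  induction n with
  | zero => rfl
  | succ n ih =>
    rw [stirlingSecond_succ_succ]
    push_cast
    linear_combination 5 * ih + 5 * twentyFour_mul_stirlingSecond_four n

lemma oneHundredTwenty_mul_stirlingSecond_five_zmod (t : ℕ) {r : ℕ} (hr : 10 ≤ r) :
    120 * (stirlingSecond (256 * t + r) 5 : ZMod 1024) = 5 ^ r + 10 * 3 ^ r + 5 := by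
  obtain ⟨n, hn⟩ : ∃ n, 256 * t + r = n + 1 := ⟨256 * t + r - 1, by omega⟩
  have hformula := congrArg (Int.cast : ℤ → ZMod 1024) (oneHundredTwenty_mul_stirlingSecond_five n)
  push_cast at hformula
  rw [hn, hformula, ← hn]
  have pow_periodic {a : ZMod 1024} (ha : a ^ 256 = 1) : a ^ (256 * t + r) = a ^ r := by
    rw [pow_add, pow_mul, ha, one_pow, one_mul]
  rw [pow_eq_zero_of_le (a := (4 : ZMod 1024)) (m := 5) (by omega) (by reduce_mod_char),
    pow_eq_zero_of_le (a := (2 : ZMod 1024)) (m := 10) (by omega) (by reduce_mod_char),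
    pow_periodic (a := 5) (by reduce_mod_char), pow_periodic (a := 3) (by reduce_mod_char)]
  ring

lemma two_pow_seven_dvd_of_oneHundredTwenty_mul_eq_zero {m : ℕ}
    (h : 120 * (m : ZMod 1024) = 0) : 2 ^ 7 ∣ m := by
  have h1024 : 1024 ∣ 120 * m := (ZMod.natCast_eq_zero_iff (120 * m) 1024).mp (by push_cast; exact h)
  omega

lemma six_lt_padicValNat_stirlingSecond_five {t r : ℕ} (hr : 10 ≤ r)
    (h : (5 : ZMod 1024) ^ r + 10 * 3 ^ r + 5 = 0) :
    6 < padicValNat 2 (stirlingSecond (256 * t + r) 5) := by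
  have hpos := stirlingSecond_pos (n := 256 * t + r) (k := 5) (by norm_num) (by omega)
  have hdvd := two_pow_seven_dvd_of_oneHundredTwenty_mul_eq_zero
    ((oneHundredTwenty_mul_stirlingSecond_five_zmod t hr).trans h)
  exact (padicValNat_dvd_iff_le (p := 2) hpos.ne').mp hdvd

theorem stmt_12 (t : ℕ) :
    6 < padicValNat 2 (stirling2 (256 * t + 156) 5) ∧
    6 < padicValNat 2 (stirling2 (256 * t + 31) 5) := by
  rw [stirling2_eq_stirlingSecond]
  exact ⟨six_lt_padicValNat_stirlingSecond_five (by norm_num) (by reduce_mod_char),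
    six_lt_padicValNat_stirlingSecond_five (by norm_num) (by reduce_mod_char)⟩
end
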